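/- Let A be a positive bounded operator on a Hilbert space H and S a closed subspace. Then R(A) ∩ S ⊆ R([S]A) ⊆ R(([S]A)^{1/2}) = R(A^{1/2}) ∩ S; in particular R([S]A) is closed whenever R(A) ∩ S = R(A^{1/2}) ∩ S. -/

import Mathlib

/-! Write `[S]A = B B*` with `B = A^{1/2} P_M`. The square root `([S]A)^{1/2}` satisfies the same
identity `([S]A)^{1/2} (([S]A)^{1/2})* = B B*`, so Douglas' range criterion gives
`R(([S]A)^{1/2}) = R(B) = A^{1/2}(M) = R(A^{1/2}) ∩ S`. If `A x ∈ S` then `A^{1/2} x ∈ M` is fixed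
by `P_M`, whence `R(A) ∩ S ⊆ R([S]A)`. When `R(A) ∩ S = R(A^{1/2}) ∩ S` the chain collapses to
`R(C) = R(C²)` for `C = ([S]A)^{1/2}`, and a selfadjoint `C` with `R(C) ⊆ R(C²)` has closed range:
every `y` splits as `C u + k` with `k ∈ ker C`, and for `y ∈ closure R(C) ⊆ (ker C)ᗮ` this forces
`k = 0`. -/

open ContinuousLinearMap

/-- `P` is the orthogonal projection onto the closed subspace `S`: a selfadjoint
idempotent with range `S`. -/
def IsOrthoProj {E : Type*} [NormedAddCommGroup E] [InnerProductSpace ℂ E] [CompleteSpace E]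
    (P : E →L[ℂ] E) (S : Submodule ℂ E) : Prop :=
  IsIdempotentElem P ∧ IsSelfAdjoint P ∧ LinearMap.range (P : E →ₗ[ℂ] E) = S

variable {H : Type*} [NormedAddCommGroup H] [InnerProductSpace ℂ H] [CompleteSpace H]

open scoped InnerProductSpace

section Range

variable {𝕜 E F G : Type*} [RCLike 𝕜]
  [NormedAddCommGroup E] [InnerProductSpace 𝕜 E] [CompleteSpace E]
  [NormedAddCommGroup F] [InnerProductSpace 𝕜 F] [CompleteSpace F]
  [NormedAddCommGroup G] [InnerProductSpace 𝕜 G] [CompleteSpace G]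

theorem ContinuousLinearMap.mem_range_of_norm_inner_le (T : E →L[𝕜] F) (y : F) (c : ℝ)
    (h : ∀ x, ‖⟪y, x⟫_𝕜‖ ≤ c * ‖adjoint T x‖) : y ∈ T.range := by
  set S : F →ₗ[𝕜] E := (adjoint T).toLinearMap
  have hker : S.ker ≤ (innerₛₗ 𝕜 y).ker := fun x hx => by
    have hx' := h x
    rw [show adjoint T x = 0 from hx, norm_zero, mul_zero] at hx'
    exact norm_le_zero_iff.mp hx'
  -- `x ↦ ⟪y, x⟫` factors through `adjoint T` with norm at most `c` on its range; extend it by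
  -- Hahn–Banach and represent it by Riesz.
  let f : S.range →ₗ[𝕜] 𝕜 := S.ker.liftQ _ hker ∘ₗ S.quotKerEquivRange.symm.toLinearMap
  have hf : ∀ x, f ⟨S x, S.mem_range_self x⟩ = ⟪y, x⟫_𝕜 := fun x => by
    simp only [f, LinearMap.comp_apply, LinearEquiv.coe_coe,
      LinearMap.quotKerEquivRange_symm_apply_image]
    rfl
  have hf_bound : ∀ w, ‖f w‖ ≤ c * ‖w‖ := by
    rintro ⟨_, x, rfl⟩
    rw [hf]
    exact h x
  obtain ⟨g, hg, -⟩ := exists_extension_norm_eq _ (f.mkContinuous c hf_bound)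
  refine ⟨(InnerProductSpace.toDual 𝕜 E).symm g, ext_inner_right 𝕜 fun x => ?_⟩
  rw [coe_coe, ← adjoint_inner_right, InnerProductSpace.toDual_symm_apply]
  exact (hg ⟨S x, S.mem_range_self x⟩).trans (hf x)

theorem ContinuousLinearMap.range_le_range_of_norm_adjoint_apply_le (T : E →L[𝕜] F)
    (U : G →L[𝕜] F) (h : ∀ x, ‖adjoint T x‖ ≤ ‖adjoint U x‖) : T.range ≤ U.range := by
  rintro _ ⟨u, rfl⟩
  refine U.mem_range_of_norm_inner_le _ ‖u‖ fun x => ?_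
  calc ‖⟪T u, x⟫_𝕜‖ = ‖⟪u, adjoint T x⟫_𝕜‖ := by rw [adjoint_inner_right]
    _ ≤ ‖u‖ * ‖adjoint T x‖ := norm_inner_le_norm _ _
    _ ≤ ‖u‖ * ‖adjoint U x‖ := by gcongr; exact h x

theorem ContinuousLinearMap.norm_adjoint_apply_eq_of_comp_adjoint_eq (T : E →L[𝕜] F)
    (U : G →L[𝕜] F) (h : T ∘L adjoint T = U ∘L adjoint U) (x : F) :
    ‖adjoint T x‖ = ‖adjoint U x‖ := by
  rw [← sq_eq_sq₀ (norm_nonneg _) (norm_nonneg _), apply_norm_sq_eq_inner_adjoint_left,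
    apply_norm_sq_eq_inner_adjoint_left, adjoint_adjoint, adjoint_adjoint, h]

theorem ContinuousLinearMap.range_eq_range_of_comp_adjoint_eq (T : E →L[𝕜] F)
    (U : G →L[𝕜] F) (h : T ∘L adjoint T = U ∘L adjoint U) : T.range = U.range :=
  le_antisymm
    (T.range_le_range_of_norm_adjoint_apply_le U fun x =>
      (T.norm_adjoint_apply_eq_of_comp_adjoint_eq U h x).le)
    (U.range_le_range_of_norm_adjoint_apply_le T fun x =>
      (T.norm_adjoint_apply_eq_of_comp_adjoint_eq U h x).ge)

theorem IsSelfAdjoint.isClosed_range_of_range_le_range_sq {C : E →L[𝕜] E} (hC : IsSelfAdjoint C)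
    (h : C.range ≤ (C ∘L C).range) : IsClosed (C.range : Set E) := by
  have h_range : C.range ≤ C.kerᗮ := by
    have := Submodule.le_orthogonal_orthogonal C.range
    rwa [orthogonal_range, hC.adjoint_eq] at this
  refine isClosed_of_closure_subset fun y hy => ?_
  have hy_perp : y ∈ C.kerᗮ :=
    closure_minimal h_range (Submodule.isClosed_orthogonal _) hy
  obtain ⟨u, hu⟩ := h ⟨y, rfl⟩
  have h_sub : y - C u ∈ C.ker ⊓ C.kerᗮ := by
    refine ⟨?_, sub_mem hy_perp (h_range ⟨u, rfl⟩)⟩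
    change C (y - C u) = 0
    rw [map_sub, sub_eq_zero]
    exact hu.symm
  rw [Submodule.inf_orthogonal_eq_bot, Submodule.mem_bot, sub_eq_zero] at h_sub
  exact ⟨u, h_sub.symm⟩

end Range

theorem LinearMap.range_comp_inf_le_range_comp_comp {R M N K : Type*} [Semiring R]
    [AddCommMonoid M] [Module R M] [AddCommMonoid N] [Module R N] [AddCommMonoid K] [Module R K]
    {f : M →ₗ[R] N} {g : K →ₗ[R] M} {P : M →ₗ[R] M} {S : Submodule R N}
    (hP : IsIdempotentElem P) (hPS : P.range = S.comap f) :
    (f ∘ₗ g).range ⊓ S ≤ (f ∘ₗ P ∘ₗ g).range := by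
  rintro _ ⟨⟨x, rfl⟩, hx⟩
  have h_fix : P (g x) = g x := (LinearMap.IsIdempotentElem.mem_range_iff hP).mp (hPS ▸ hx)
  exact ⟨x, by simp only [comp_apply, h_fix]⟩

/-- `sA` is the positive square root of `A`, `PM` the orthogonal projection onto
`M = (A^{1/2})⁻¹(S)`, so that `[S]A = sA ∘ PM ∘ sA`, and `sT` is the positive square root
of `[S]A`. -/
theorem shorted_range_inclusions (A sA : H →L[ℂ] H) (hsA : sA.IsPositive) (hsA2 : sA ∘L sA = A)
    (S : Submodule ℂ H)
    (PM : H →L[ℂ] H) (hPM : IsOrthoProj PM (Submodule.comap (sA : H →ₗ[ℂ] H) S))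
    (sT : H →L[ℂ] H) (hsT : sT.IsPositive) (hsT2 : sT ∘L sT = sA ∘L PM ∘L sA) :
    LinearMap.range (A : H →ₗ[ℂ] H) ⊓ S ≤ LinearMap.range ((sA ∘L PM ∘L sA : H →L[ℂ] H) : H →ₗ[ℂ] H) ∧
    LinearMap.range ((sA ∘L PM ∘L sA : H →L[ℂ] H) : H →ₗ[ℂ] H) ≤ LinearMap.range (sT : H →ₗ[ℂ] H) ∧
    LinearMap.range (sT : H →ₗ[ℂ] H) = LinearMap.range (sA : H →ₗ[ℂ] H) ⊓ S ∧
    (LinearMap.range (A : H →ₗ[ℂ] H) ⊓ S = LinearMap.range (sA : H →ₗ[ℂ] H) ⊓ S →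
      IsClosed ((LinearMap.range ((sA ∘L PM ∘L sA : H →L[ℂ] H) : H →ₗ[ℂ] H) : Submodule ℂ H) : Set H)) := by
  obtain ⟨hPM_idem, hPM_sa, hPM_range⟩ := hPM
  have hsA_sa : IsSelfAdjoint sA := hsA.isSelfAdjoint
  have hsT_sa : IsSelfAdjoint sT := hsT.isSelfAdjoint
  have h_factor : (sA ∘L PM) ∘L adjoint (sA ∘L PM) = sA ∘L PM ∘L sA := by
    rw [adjoint_comp, hsA_sa.adjoint_eq, hPM_sa.adjoint_eq, comp_assoc, ← comp_assoc PM PM sA]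
    exact congrArg (fun Q => sA ∘L Q ∘L sA) hPM_idem
  have h_sT : sT.range = sA.range ⊓ S := by
    have h_sq : sT ∘L adjoint sT = (sA ∘L PM) ∘L adjoint (sA ∘L PM) := by
      rw [hsT_sa.adjoint_eq, hsT2, h_factor]
    rw [range_eq_range_of_comp_adjoint_eq sT (sA ∘L PM) h_sq, toLinearMap_comp,
      LinearMap.range_comp, hPM_range, Submodule.map_comap_eq]
  have h_A : A.range ⊓ S ≤ (sA ∘L PM ∘L sA).range := by
    rw [← hsA2]
    exact LinearMap.range_comp_inf_le_range_comp_comp hPM_idem.toLinearMap hPM_range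
  have h_short : (sA ∘L PM ∘L sA).range ≤ sT.range := by
    rw [← hsT2]
    exact LinearMap.range_comp_le_range _ _
  refine ⟨h_A, h_short, h_sT, fun h_ranges => ?_⟩
  have h_eq : (sA ∘L PM ∘L sA).range = sT.range := le_antisymm h_short (h_sT ▸ h_ranges ▸ h_A)
  rw [h_eq]
  exact hsT_sa.isClosed_range_of_range_le_range_sq (by rw [hsT2, h_eq])
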